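/- Let X_1,...,X_n be random variables that are negatively associated, each nonnegative with finite expectation. Set τ = (1/2)E[max_i X_i] and let ALG be the stopping rule accepting the first X_i ≥ τ. Then E[ALG] ≥ (1/2)E[max_i X_i]. -/

import Mathlib

/-!
Write the rule's value as `τ · 1[some X_i ≥ τ] + ∑_i 1[B_i] · (X_i - τ)⁺`, where `B_i` is the event
that no `X_j` with `j < i` reached `τ`: only the first index reaching `τ` contributes to the sum.
Since `(X_i - τ)⁺` is increasing in `X_i` and `B_i` is decreasing in the earlier values, negative
association and the layer-cake formula give `E[1[B_i] (X_i - τ)⁺] ≥ Pr[B_i] E[(X_i - τ)⁺]`, and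
`Pr[B_i] ≥ 1 - p`, where `p` is the probability that `τ` is reached at all. Together with
`max_i X_i - τ ≤ ∑_i (X_i - τ)⁺` this yields `E[ALG] ≥ τ p + (1 - p) (E[max_i X_i] - τ)`,
which equals `τ` for `τ = E[max_i X_i] / 2`.
-/

open MeasureTheory ProbabilityTheory Finset

open scoped Classical in
/-- Value obtained by the stopping rule that accepts the first `X i ≥ τ` (0 if none). -/
noncomputable def algValue {Ω : Type*} {n : ℕ} (X : Fin (n + 1) → Ω → ℝ) (τ : ℝ) (ω : Ω) : ℝ :=
  if h : (Finset.univ.filter (fun i => τ ≤ X i ω)).Nonempty then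
    X ((Finset.univ.filter (fun i => τ ≤ X i ω)).min' h) ω
  else 0

section CorrelationFromTails

variable {Ω : Type*} [MeasurableSpace Ω] {μ : Measure Ω} [IsFiniteMeasure μ]

/-- Layer cake: integrating the tail inequality over the thresholds `a > 0`. -/
theorem measureReal_mul_integral_le_integral_indicator {Y : Ω → ℝ} (hY : Measurable Y)
    (hY0 : 0 ≤ Y) (hYint : Integrable Y μ) {B : Set Ω} (hB : MeasurableSet B)
    (h : ∀ a, 0 < a → μ {ω | a ≤ Y ω} * μ B ≤ μ ({ω | a ≤ Y ω} ∩ B)) :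
    μ.real B * ∫ ω, Y ω ∂μ ≤ ∫ ω, B.indicator Y ω ∂μ := by
  have hZ0 : 0 ≤ B.indicator Y := Set.indicator_nonneg fun ω _ => hY0 ω
  have hlevel : ∀ a, 0 < a → {ω | a ≤ B.indicator Y ω} = {ω | a ≤ Y ω} ∩ B := by
    intro a ha
    ext ω
    by_cases hω : ω ∈ B <;> simp [hω, ha.not_ge]
  have hlintegral : μ B * ∫⁻ ω, ENNReal.ofReal (Y ω) ∂μ
      ≤ ∫⁻ ω, ENNReal.ofReal (B.indicator Y ω) ∂μ := by
    rw [lintegral_eq_lintegral_meas_le μ (.of_forall hY0) hY.aemeasurable,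
      lintegral_eq_lintegral_meas_le μ (.of_forall hZ0) (hY.indicator hB).aemeasurable,
      ← lintegral_const_mul' _ _ (measure_ne_top μ B)]
    refine setLIntegral_mono' measurableSet_Ioi fun a ha => ?_
    rw [hlevel a ha, mul_comm]
    exact h a ha
  rw [integral_eq_lintegral_of_nonneg_ae (.of_forall hY0) hY.aestronglyMeasurable,
    integral_eq_lintegral_of_nonneg_ae (.of_forall hZ0) (hY.indicator hB).aestronglyMeasurable,
    measureReal_def, ← ENNReal.toReal_mul]
  exact ENNReal.toReal_mono (hYint.indicator hB).lintegral_lt_top.ne hlintegral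

end CorrelationFromTails

section StoppingRule

variable {Ω ι : Type*}

def thresholdReached (X : ι → Ω → ℝ) (τ : ℝ) : Set Ω := {ω | ∃ i, τ ≤ X i ω}

def belowBefore [LT ι] (X : ι → Ω → ℝ) (τ : ℝ) (i : ι) : Set Ω := {ω | ∀ j < i, X j ω < τ}

theorem compl_thresholdReached_subset_belowBefore [LT ι] (X : ι → Ω → ℝ) (τ : ℝ) (i : ι) :
    (thresholdReached X τ)ᶜ ⊆ belowBefore X τ i :=
  fun _ hω j _ => not_le.mp fun hj => hω ⟨j, hj⟩

variable [MeasurableSpace Ω] [Countable ι] {X : ι → Ω → ℝ}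

theorem measurableSet_thresholdReached (hX : ∀ i, Measurable (X i)) (τ : ℝ) :
    MeasurableSet (thresholdReached X τ) := by
  simp only [thresholdReached, Set.ofPred_exists]
  exact .iUnion fun i => measurableSet_le measurable_const (hX i)

theorem measurableSet_belowBefore [LT ι] (hX : ∀ i, Measurable (X i)) (τ : ℝ) (i : ι) :
    MeasurableSet (belowBefore X τ i) := by
  simp only [belowBefore, Set.ofPred_forall]
  exact .iInter fun j => .iInter fun _ => measurableSet_lt (hX j) measurable_const

end StoppingRule

theorem algValue_eq_indicator_add_sum {Ω : Type*} {n : ℕ} (X : Fin (n + 1) → Ω → ℝ) (τ : ℝ)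
    (ω : Ω) :
    algValue X τ ω = (thresholdReached X τ).indicator (fun _ => τ) ω
      + ∑ i, (belowBefore X τ i).indicator (fun ω => (X i ω - τ)⁺) ω := by
  unfold algValue
  split_ifs with h
  · set i₀ := (univ.filter fun i => τ ≤ X i ω).min' h
    have hi₀ : τ ≤ X i₀ ω := (mem_filter.mp (min'_mem _ h)).2
    have hbefore : ω ∈ belowBefore X τ i₀ := fun j hj =>
      not_le.mp fun hj' => (min'_le _ j (by simp [hj'])).not_gt hj
    have hreached : ω ∈ thresholdReached X τ := ⟨i₀, hi₀⟩
    rw [Set.indicator_of_mem hreached, sum_eq_single i₀, Set.indicator_of_mem hbefore,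
      posPart_of_nonneg (sub_nonneg.2 hi₀), add_sub_cancel]
    · intro i _ hi
      rcases hi.lt_or_gt with hlt | hgt
      · exact Set.indicator_apply_eq_zero.2 fun _ =>
          posPart_eq_zero.2 (sub_nonpos.2 (hbefore i hlt).le)
      · exact Set.indicator_of_notMem (fun hb => (hb i₀ hgt).not_ge hi₀) _
    · simp
  · have hbelow : ∀ i, X i ω < τ := fun i => not_le.mp fun hi => h ⟨i, by simp [hi]⟩
    have hunreached : ω ∉ thresholdReached X τ := fun ⟨i, hi⟩ => (hbelow i).not_ge hi
    rw [Set.indicator_of_notMem hunreached, zero_add]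
    refine (sum_eq_zero fun i _ => ?_).symm
    exact Set.indicator_apply_eq_zero.2 fun _ => posPart_eq_zero.2 (sub_nonpos.2 (hbelow i).le)

/-- The conditional form `Pr[f ≥ a] ≤ Pr[f ≥ a | g ≤ b]` of negative association, multiplied out
by `Pr[g ≤ b]` so that it also makes sense when that probability vanishes. -/
def NegativelyAssociated {Ω ι : Type*} [MeasurableSpace Ω] (μ : Measure Ω)
    (X : ι → Ω → ℝ) : Prop :=
  ∀ (S S' : Finset ι), Disjoint S S' →
    ∀ (f : (S → ℝ) → ℝ) (g : (S' → ℝ) → ℝ), Monotone f → Monotone g →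
    ∀ a b : ℝ,
      μ {ω | a ≤ f (fun j => X j.1 ω)} * μ {ω | g (fun j => X j.1 ω) ≤ b}
        ≤ μ {ω | a ≤ f (fun j => X j.1 ω) ∧ g (fun j => X j.1 ω) ≤ b}

theorem NegativelyAssociated.measure_excess_mul_le {Ω ι : Type*} [MeasurableSpace Ω]
    {μ : Measure Ω} [Fintype ι] [LinearOrder ι] {X : ι → Ω → ℝ} (hX : NegativelyAssociated μ X)
    (τ : ℝ) (i : ι) (a : ℝ) :
    μ {ω | a ≤ (X i ω - τ)⁺} * μ (belowBefore X τ i)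
      ≤ μ ({ω | a ≤ (X i ω - τ)⁺} ∩ belowBefore X τ i) := by
  let f : (({i} : Finset ι) → ℝ) → ℝ := fun x => (x ⟨i, mem_singleton_self i⟩ - τ)⁺
  let g : (univ.filter (· < i) → ℝ) → ℝ := fun x => if ∃ j, τ ≤ x j then 1 else 0
  have hf : Monotone f := fun x y hxy => posPart_mono (sub_le_sub_right (hxy _) τ)
  have hg : Monotone g := by
    intro x y hxy
    simp only [g]
    split_ifs with hx hy
    · exact le_rfl
    · exact absurd (hx.imp fun j hj => hj.trans (hxy j)) hy
    all_goals norm_num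
  have hg0 : ∀ ω, g (fun j => X j.1 ω) ≤ 0 ↔ ω ∈ belowBefore X τ i := by
    intro ω
    simp only [g, belowBefore, Set.mem_ofPred_eq]
    split_ifs with h
    · obtain ⟨⟨j, hj⟩, hτ⟩ := h
      simp only [zero_lt_one.not_ge, false_iff, not_forall, not_lt]
      exact ⟨j, (mem_filter.mp hj).2, hτ⟩
    · exact iff_of_true le_rfl fun j hj => not_le.mp fun hτ => h ⟨⟨j, by simpa using hj⟩, hτ⟩
  have hdisj : Disjoint ({i} : Finset ι) (univ.filter (· < i)) := by simp
  simpa only [hg0, Set.ofPred_and, Set.ofPred_mem_eq] using hX _ _ hdisj f g hf hg a 0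

section ProphetBound

variable {Ω ι : Type*} [MeasurableSpace Ω] {μ : Measure Ω}

theorem integrable_finset_sup' {s : Finset ι} (hs : s.Nonempty) {X : ι → Ω → ℝ}
    (hX : ∀ i ∈ s, Integrable (X i) μ) : Integrable (fun ω => s.sup' hs fun i => X i ω) μ := by
  simp_rw [← Finset.sup'_apply]
  exact Finset.sup'_induction hs X (p := (Integrable · μ)) (fun _ hf _ hg => hf.sup hg) hX

variable [IsProbabilityMeasure μ]

theorem integral_sup'_sub_le_sum_integral_posPart [Fintype ι] [Nonempty ι] {X : ι → Ω → ℝ}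
    (hint : ∀ i, Integrable (X i) μ) (τ : ℝ) :
    ∫ ω, univ.sup' univ_nonempty (fun i => X i ω) ∂μ - τ ≤ ∑ i, ∫ ω, (X i ω - τ)⁺ ∂μ := by
  have hpoint : ∀ ω, univ.sup' univ_nonempty (fun i => X i ω) - τ ≤ ∑ i, (X i ω - τ)⁺ := by
    intro ω
    obtain ⟨i, -, hi⟩ := exists_mem_eq_sup' univ_nonempty fun i => X i ω
    rw [hi]
    exact (le_posPart _).trans
      (single_le_sum (f := fun j => (X j ω - τ)⁺) (fun j _ => posPart_nonneg _) (mem_univ i))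
  have hmax := integrable_finset_sup' univ_nonempty fun i _ => hint i
  have hexcess : ∀ i, Integrable (fun ω => (X i ω - τ)⁺) μ := fun i =>
    ((hint i).sub (integrable_const τ)).pos_part
  calc ∫ ω, univ.sup' univ_nonempty (fun i => X i ω) ∂μ - τ
      = ∫ ω, (univ.sup' univ_nonempty (fun i => X i ω) - τ) ∂μ := by
        rw [integral_sub hmax (integrable_const τ), integral_const, probReal_univ, one_smul]
    _ ≤ ∫ ω, ∑ i, (X i ω - τ)⁺ ∂μ :=
        integral_mono (hmax.sub (integrable_const τ)) (integrable_finsetSum _ fun i _ => hexcess i)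
          hpoint
    _ = ∑ i, ∫ ω, (X i ω - τ)⁺ ∂μ := integral_finsetSum _ fun i _ => hexcess i

theorem NegativelyAssociated.measureReal_mul_add_le_integral_algValue {n : ℕ}
    {X : Fin (n + 1) → Ω → ℝ} (hNA : NegativelyAssociated μ X) (hmeas : ∀ i, Measurable (X i))
    (hint : ∀ i, Integrable (X i) μ) (τ : ℝ) :
    τ * μ.real (thresholdReached X τ) + (1 - μ.real (thresholdReached X τ))
        * (∫ ω, univ.sup' univ_nonempty (fun i => X i ω) ∂μ - τ)
      ≤ ∫ ω, algValue X τ ω ∂μ := by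
  set p := μ.real (thresholdReached X τ)
  set B := belowBefore X τ
  set Y : Fin (n + 1) → Ω → ℝ := fun i ω => (X i ω - τ)⁺
  have hYint : ∀ i, Integrable (Y i) μ := fun i =>
    ((hint i).sub (integrable_const τ)).pos_part
  have hBint : ∀ i, Integrable ((B i).indicator (Y i)) μ := fun i =>
    (hYint i).indicator (measurableSet_belowBefore hmeas τ i)
  have hreached := measurableSet_thresholdReached hmeas τ
  have hopen : ∀ i, 1 - p ≤ μ.real (B i) := fun i => by
    rw [← probReal_compl_eq_one_sub hreached]
    exact measureReal_mono (compl_thresholdReached_subset_belowBefore X τ i)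
  have hcorr : ∀ i, μ.real (B i) * ∫ ω, Y i ω ∂μ ≤ ∫ ω, (B i).indicator (Y i) ω ∂μ := fun i =>
    measureReal_mul_integral_le_integral_indicator (((hmeas i).sub_const τ).max measurable_const)
      (fun ω => posPart_nonneg _) (hYint i) (measurableSet_belowBefore hmeas τ i)
      fun a _ => hNA.measure_excess_mul_le τ i a
  have hdecomp : ∫ ω, algValue X τ ω ∂μ = τ * p + ∑ i, ∫ ω, (B i).indicator (Y i) ω ∂μ := by
    simp_rw [algValue_eq_indicator_add_sum]
    rw [integral_add ((integrable_const τ).indicator hreached)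
        (integrable_finsetSum _ fun i _ => hBint i),
      integral_finsetSum _ fun i _ => hBint i, integral_indicator_const _ hreached, smul_eq_mul,
      mul_comm]
  have hp : 0 ≤ 1 - p := sub_nonneg.2 measureReal_le_one
  calc τ * p + (1 - p) * (∫ ω, univ.sup' univ_nonempty (fun i => X i ω) ∂μ - τ)
      ≤ τ * p + ∑ i, (1 - p) * ∫ ω, Y i ω ∂μ := by
        rw [← mul_sum]
        gcongr
        exact integral_sup'_sub_le_sum_integral_posPart hint τ
    _ ≤ τ * p + ∑ i, ∫ ω, (B i).indicator (Y i) ω ∂μ := by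
        gcongr with i
        calc (1 - p) * ∫ ω, Y i ω ∂μ ≤ μ.real (B i) * ∫ ω, Y i ω ∂μ :=
              mul_le_mul_of_nonneg_right (hopen i) (integral_nonneg fun ω => posPart_nonneg _)
          _ ≤ _ := hcorr i
    _ = ∫ ω, algValue X τ ω ∂μ := hdecomp.symm

end ProphetBound

theorem stmt14_general {Ω : Type*} [MeasurableSpace Ω] (μ : Measure Ω) [IsProbabilityMeasure μ]
    {n : ℕ} (X : Fin (n + 1) → Ω → ℝ)
    (hmeas : ∀ i, Measurable (X i))
    (hint : ∀ i, Integrable (X i) μ)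
    (hNA : ∀ (S S' : Finset (Fin (n + 1))), Disjoint S S' →
      ∀ (f : (S → ℝ) → ℝ) (g : (S' → ℝ) → ℝ), Monotone f → Monotone g →
      ∀ a b : ℝ,
        μ {ω | a ≤ f (fun j => X j.1 ω)} * μ {ω | g (fun j => X j.1 ω) ≤ b}
          ≤ μ {ω | a ≤ f (fun j => X j.1 ω) ∧ g (fun j => X j.1 ω) ≤ b})
    (τ : ℝ)
    (hτ : τ = (1 / 2) * ∫ ω, Finset.univ.sup' Finset.univ_nonempty (fun i => X i ω) ∂μ) :
    (1 / 2) * ∫ ω, Finset.univ.sup' Finset.univ_nonempty (fun i => X i ω) ∂μ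
      ≤ ∫ ω, algValue X τ ω ∂μ := by
  have hbound :=
    NegativelyAssociated.measureReal_mul_add_le_integral_algValue (μ := μ) hNA hmeas hint τ
  have hexcess : ∫ ω, univ.sup' univ_nonempty (fun i => X i ω) ∂μ - τ = τ := by linarith
  rw [hexcess] at hbound
  linarith

/-- Prophet inequality for negatively associated values: with
`τ = (1/2)·E[max_i X_i]`, the rule accepting the first `X_i ≥ τ` gets at least
`(1/2)·E[max_i X_i]`. -/
theorem stmt14 {Ω : Type*} [MeasurableSpace Ω] (μ : Measure Ω) [IsProbabilityMeasure μ]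
    {n : ℕ} (X : Fin (n + 1) → Ω → ℝ)
    (hmeas : ∀ i, Measurable (X i)) (hnn : ∀ i ω, 0 ≤ X i ω)
    (hint : ∀ i, Integrable (X i) μ)
    (hNA : ∀ (S S' : Finset (Fin (n + 1))), Disjoint S S' →
      ∀ (f : (S → ℝ) → ℝ) (g : (S' → ℝ) → ℝ), Monotone f → Monotone g →
      ∀ a b : ℝ,
        μ {ω | a ≤ f (fun j => X j.1 ω)} * μ {ω | g (fun j => X j.1 ω) ≤ b}
          ≤ μ {ω | a ≤ f (fun j => X j.1 ω) ∧ g (fun j => X j.1 ω) ≤ b})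
    (τ : ℝ)
    (hτ : τ = (1 / 2) * ∫ ω, Finset.univ.sup' Finset.univ_nonempty (fun i => X i ω) ∂μ) :
    (1 / 2) * ∫ ω, Finset.univ.sup' Finset.univ_nonempty (fun i => X i ω) ∂μ
      ≤ ∫ ω, algValue X τ ω ∂μ :=
  stmt14_general μ X hmeas hint hNA τ hτ
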